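/- arXiv:2007.08900 — 2 statements merged into one kernel-verified Lean document; each statement's English description precedes it below -/
import Mathlib

section
/- For all indices i, k, l, j with 0 ≤ i ≤ k < l ≤ j ≤ n−1, the orthogonal distance from the shorter segment to the cloud satisfies D(k,l) ≤ 2·D(i,j). (Lemma 5, 'segment_error': any sub-segment of a segment that ε-approximates a monotone cloud 2ε-approximates the corresponding subcloud.) -/
/-- The projection value `t s = ⟪p s, u⟫` of the cloud point `p s` onto the direction `u`. -/
noncomputable def projVal {d n : ℕ} (p : Fin n → EuclideanSpace ℝ (Fin d))
    (u : EuclideanSpace ℝ (Fin d)) (s : Fin n) : ℝ :=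
  inner ℝ (p s) u

/-- The point `q(s,i,j)` of the straight segment `[p i, p j]` whose projection
onto `u` equals `t s`. -/
noncomputable def segPoint {d n : ℕ} (p : Fin n → EuclideanSpace ℝ (Fin d))
    (u : EuclideanSpace ℝ (Fin d)) (s i j : Fin n) : EuclideanSpace ℝ (Fin d) :=
  p i + ((projVal p u s - projVal p u i) / (projVal p u j - projVal p u i)) • (p j - p i)

/-- The orthogonal distance `dOrth(s,i,j)` from `p s` to the segment `[p i, p j]`,
measured orthogonally to `u`. -/
noncomputable def dOrth {d n : ℕ} (p : Fin n → EuclideanSpace ℝ (Fin d))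
    (u : EuclideanSpace ℝ (Fin d)) (s i j : Fin n) : ℝ :=
  dist (p s) (segPoint p u s i j)

/-- The orthogonal distance `D(i,j)` from the segment `[p i, p j]` to the cloud:
the maximum of `dOrth(s,i,j)` over `i ≤ s ≤ j` (endpoints contribute `0`). -/
noncomputable def segCloudDist {d n : ℕ} (p : Fin n → EuclideanSpace ℝ (Fin d))
    (u : EuclideanSpace ℝ (Fin d)) (i j : Fin n) : ℝ :=
  (insert (0 : ℝ) ((Finset.Icc i j).image fun s => dOrth p u s i j)).max'
    (Finset.insert_nonempty _ _)

/-! The points `q(k,i,j)` and `q(l,i,j)` lie within `D(i,j)` of `p k` and `p l`. Since `q(·,i,j)`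
is affine in the projection value, `q(s,i,j)` sits on `[q(k,i,j), q(l,i,j)]` at the same parameter
as `q(s,k,l)` on `[p k, p l]`, so by convexity of balls these two points are `D(i,j)`-close. The
triangle inequality through `q(s,i,j)` gives `dOrth(s,k,l) ≤ 2 D(i,j)`. -/

open AffineMap Set

theorem dist_lineMap_lineMap_le {V P : Type*} [SeminormedAddCommGroup V] [NormedSpace ℝ V]
    [PseudoMetricSpace P] [NormedAddTorsor V P] {a b a' b' : P} {c D : ℝ} (hc : c ∈ Icc 0 1)
    (ha : dist a a' ≤ D) (hb : dist b b' ≤ D) :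
    dist (lineMap a b c) (lineMap a' b' c) ≤ D := by
  rw [dist_eq_norm_vsub V, lineMap_vsub_lineMap, ← mem_closedBall_zero_iff]
  rw [dist_eq_norm_vsub V, ← mem_closedBall_zero_iff] at ha hb
  exact (convex_closedBall 0 D).lineMap_mem ha hb hc

theorem lineMap_div_sub_eq_lineMap_lineMap {V P : Type*} [AddCommGroup V] [Module ℝ V]
    [AddTorsor V P] (a b : P) {ti tj tk tl : ℝ} (hij : ti ≠ tj) (hkl : tk ≠ tl) (ts : ℝ) :
    lineMap a b ((ts - ti) / (tj - ti)) =
      lineMap (lineMap a b ((tk - ti) / (tj - ti))) (lineMap a b ((tl - ti) / (tj - ti)))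
        ((ts - tk) / (tl - tk)) := by
  rw [← (lineMap a b).apply_lineMap, lineMap_apply_ring']
  congr 1
  have hji : tj - ti ≠ 0 := sub_ne_zero.2 hij.symm
  have hlk : tl - tk ≠ 0 := sub_ne_zero.2 hkl.symm
  field_simp
  ring

theorem sub_div_sub_mem_Icc {a x b : ℝ} (hax : a ≤ x) (hxb : x ≤ b) :
    (x - a) / (b - a) ∈ Icc (0 : ℝ) 1 :=
  ⟨div_nonneg (sub_nonneg.2 hax) (sub_nonneg.2 (hax.trans hxb)),
    div_le_one_of_le₀ (by linarith) (sub_nonneg.2 (hax.trans hxb))⟩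

section Cloud

variable {d n : ℕ} (p : Fin n → EuclideanSpace ℝ (Fin d)) (u : EuclideanSpace ℝ (Fin d))

theorem segPoint_eq_lineMap (s i j : Fin n) :
    segPoint p u s i j = lineMap (p i) (p j)
      ((projVal p u s - projVal p u i) / (projVal p u j - projVal p u i)) := by
  rw [segPoint, lineMap_apply, vsub_eq_sub, vadd_eq_add, add_comm]

theorem segCloudDist_nonneg (i j : Fin n) : 0 ≤ segCloudDist p u i j :=
  Finset.le_max' _ 0 (Finset.mem_insert_self _ _)

theorem dOrth_le_segCloudDist {s i j : Fin n} (hs : s ∈ Finset.Icc i j) :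
    dOrth p u s i j ≤ segCloudDist p u i j :=
  Finset.le_max' _ _ (Finset.mem_insert_of_mem (Finset.mem_image_of_mem (dOrth p u · i j) hs))

theorem segCloudDist_le {i j : Fin n} {c : ℝ} (hc : 0 ≤ c)
    (h : ∀ s ∈ Finset.Icc i j, dOrth p u s i j ≤ c) : segCloudDist p u i j ≤ c := by
  refine Finset.max'_le _ _ _ fun x hx => ?_
  rcases Finset.mem_insert.1 hx with rfl | hx
  · exact hc
  · obtain ⟨s, hs, rfl⟩ := Finset.mem_image.1 hx
    exact h s hs

variable {p u}

theorem dOrth_le_two_mul_segCloudDist (hmono : StrictMono (projVal p u)) {i k l j s : Fin n}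
    (hik : i ≤ k) (hkl : k < l) (hlj : l ≤ j) (hs : s ∈ Finset.Icc k l) :
    dOrth p u s k l ≤ 2 * segCloudDist p u i j := by
  obtain ⟨hks, hsl⟩ := Finset.mem_Icc.1 hs
  have hsub : ∀ r ∈ Finset.Icc k l, r ∈ Finset.Icc i j := fun r hr =>
    Finset.mem_Icc.2 ⟨hik.trans (Finset.mem_Icc.1 hr).1, (Finset.mem_Icc.1 hr).2.trans hlj⟩
  have hclose : ∀ r ∈ Finset.Icc k l, dist (segPoint p u r i j) (p r) ≤ segCloudDist p u i j :=
    fun r hr => (dist_comm _ _).trans_le (dOrth_le_segCloudDist p u (hsub r hr))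
  have hshadow : dist (segPoint p u s i j) (segPoint p u s k l) ≤ segCloudDist p u i j := by
    rw [segPoint_eq_lineMap p u s i j, lineMap_div_sub_eq_lineMap_lineMap _ _
      (hmono (hik.trans_lt (hkl.trans_le hlj))).ne (hmono hkl).ne, ← segPoint_eq_lineMap,
      ← segPoint_eq_lineMap, segPoint_eq_lineMap p u s k l]
    exact dist_lineMap_lineMap_le (sub_div_sub_mem_Icc (hmono.monotone hks) (hmono.monotone hsl))
      (hclose k (Finset.left_mem_Icc.2 hkl.le)) (hclose l (Finset.right_mem_Icc.2 hkl.le))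
  calc dOrth p u s k l
      ≤ dist (p s) (segPoint p u s i j) + dist (segPoint p u s i j) (segPoint p u s k l) :=
        dist_triangle _ _ _
    _ ≤ segCloudDist p u i j + segCloudDist p u i j :=
        add_le_add (dOrth_le_segCloudDist p u (hsub s hs)) hshadow
    _ = 2 * segCloudDist p u i j := (two_mul _).symm

end Cloud

theorem segment_error_general {d n : ℕ}
    (p : Fin n → EuclideanSpace ℝ (Fin d)) (u : EuclideanSpace ℝ (Fin d))
    (hmono : StrictMono (projVal p u))
    (i k l j : Fin n) (hik : i ≤ k) (hkl : k < l) (hlj : l ≤ j) :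
    segCloudDist p u k l ≤ 2 * segCloudDist p u i j :=
  segCloudDist_le p u (mul_nonneg zero_le_two (segCloudDist_nonneg p u i j)) fun _ hs =>
    dOrth_le_two_mul_segCloudDist hmono hik hkl hlj hs

/-- Lemma 5 (`segment_error`): any sub-segment of a segment that `ε`-approximates a
monotone cloud `2ε`-approximates the corresponding subcloud. -/
theorem segment_error {d n : ℕ} (hd : 1 ≤ d) (hn : 2 ≤ n)
    (p : Fin n → EuclideanSpace ℝ (Fin d)) (u : EuclideanSpace ℝ (Fin d))
    (hu : ‖u‖ = 1) (hmono : StrictMono (projVal p u))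
    (i k l j : Fin n) (hik : i ≤ k) (hkl : k < l) (hlj : l ≤ j) :
    segCloudDist p u k l ≤ 2 * segCloudDist p u i j :=
  segment_error_general p u hmono i k l j hik hkl hlj
end

section
/- For all indices i, k, l, j with 0 ≤ i ≤ k < l ≤ j ≤ n−1 and every s with k ≤ s ≤ l, the same-projection points on the two segments satisfy dist (q(s,k,l)) (q(s,i,j)) ≤ max (dist (p k) (q(k,i,j))) (dist (p l) (q(l,i,j))). (Interpolation step in the proof of Lemma 5: if the endpoints p k, p l are ε-close to the segment [p i, p j] measured orthogonally to u, then every same-projection point of [p k, p l] is ε-close to the corresponding point of [p i, p j].) -/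
/-!
Both `q(·,k,l)` and `q(·,i,j)` are affine in the projection value `t`. Writing
`t s = (1 - θ) t k + θ t l` with `θ ∈ [0,1]`, the two points are therefore the convex
combinations with weight `θ` of `p k, p l` and of `q(k,i,j), q(l,i,j)` respectively. Their
difference is the same combination of `p k - q(k,i,j)` and `p l - q(l,i,j)`, so convexity
of the norm bounds it by the larger of the two endpoint distances.
-/

open AffineMap Set

section LineMap

variable {E : Type*} [NormedAddCommGroup E] [NormedSpace ℝ E]

theorem dist_lineMap_lineMap_le_max (a b c d : E) {θ : ℝ} (hθ : θ ∈ Icc (0 : ℝ) 1) :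
    dist (lineMap a b θ) (lineMap c d θ) ≤ max (dist a c) (dist b d) := by
  have hsub : lineMap a b θ - lineMap c d θ = lineMap (a - c) (b - d) θ := by
    simp only [lineMap_apply_module]
    module
  rw [dist_eq_norm, dist_eq_norm, dist_eq_norm, hsub]
  exact convexOn_univ_norm.le_max_of_mem_segment (mem_univ _) (mem_univ _)
    (lineMap_mem_segment ℝ _ _ hθ)

theorem lineMap_sub_div_sub_comp_lineMap (a b : E) (c e x y θ : ℝ) :
    lineMap a b ((lineMap x y θ - c) / e) =
      lineMap (lineMap a b ((x - c) / e)) (lineMap a b ((y - c) / e)) θ := by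
  simp only [lineMap_apply_module]
  module

end LineMap

theorem sub_div_sub_mem_Icc_s1 {x y z : ℝ} (hxz : x ≤ z) (hzy : z ≤ y) :
    (z - x) / (y - x) ∈ Icc (0 : ℝ) 1 :=
  ⟨div_nonneg (sub_nonneg.2 hxz) (sub_nonneg.2 (hxz.trans hzy)),
    div_le_one_of_le₀ (sub_le_sub_right hzy x) (sub_nonneg.2 (hxz.trans hzy))⟩

theorem lineMap_sub_div_sub {x y z : ℝ} (hxz : x ≤ z) (hzy : z ≤ y) :
    lineMap x y ((z - x) / (y - x)) = z := by
  rcases (hxz.trans hzy).eq_or_lt with rfl | hxy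
  · simp [le_antisymm hxz hzy]
  · rw [lineMap_apply_ring', div_mul_cancel₀ _ (sub_ne_zero.2 hxy.ne'), sub_add_cancel]

section Cloud

variable {d n : ℕ} (p : Fin n → EuclideanSpace ℝ (Fin d)) (u : EuclideanSpace ℝ (Fin d))

theorem segPoint_eq_lineMap_segPoint {s k l : Fin n} {θ : ℝ}
    (hs : projVal p u s = lineMap (projVal p u k) (projVal p u l) θ) (i j : Fin n) :
    segPoint p u s i j = lineMap (segPoint p u k i j) (segPoint p u l i j) θ := by
  simp only [segPoint_eq_lineMap, hs, lineMap_sub_div_sub_comp_lineMap]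

end Cloud

theorem interpolation_step_general {d n : ℕ}
    (p : Fin n → EuclideanSpace ℝ (Fin d)) (u : EuclideanSpace ℝ (Fin d))
    (hmono : StrictMono (projVal p u))
    (i k l j : Fin n)
    (s : Fin n) (hks : k ≤ s) (hsl : s ≤ l) :
    dist (segPoint p u s k l) (segPoint p u s i j) ≤
      max (dist (p k) (segPoint p u k i j)) (dist (p l) (segPoint p u l i j)) := by
  have hks' : projVal p u k ≤ projVal p u s := hmono.monotone hks
  have hsl' : projVal p u s ≤ projVal p u l := hmono.monotone hsl
  rw [segPoint_eq_lineMap p u s k l,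
    segPoint_eq_lineMap_segPoint p u (lineMap_sub_div_sub hks' hsl').symm]
  exact dist_lineMap_lineMap_le_max _ _ _ _ (sub_div_sub_mem_Icc_s1 hks' hsl')

/-- Interpolation step in the proof of Lemma 5: if the endpoints `p k`, `p l` are
`ε`-close to the segment `[p i, p j]` measured orthogonally to `u`, then every
same-projection point of `[p k, p l]` is `ε`-close to the corresponding point of
`[p i, p j]`. -/
theorem interpolation_step {d n : ℕ} (hd : 1 ≤ d) (hn : 2 ≤ n)
    (p : Fin n → EuclideanSpace ℝ (Fin d)) (u : EuclideanSpace ℝ (Fin d))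
    (hu : ‖u‖ = 1) (hmono : StrictMono (projVal p u))
    (i k l j : Fin n) (hik : i ≤ k) (hkl : k < l) (hlj : l ≤ j)
    (s : Fin n) (hks : k ≤ s) (hsl : s ≤ l) :
    dist (segPoint p u s k l) (segPoint p u s i j) ≤
      max (dist (p k) (segPoint p u k i j)) (dist (p l) (segPoint p u l i j)) :=
  interpolation_step_general p u hmono i k l j s hks hsl
end
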